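/- arXiv:2412.02572 — 2 statements merged into one kernel-verified Lean document; each statement's English description precedes it below -/
import Mathlib

section
/- For every integer q ≥ 1 and every real t > 0 there exists a compactly supported probability measure Δ on ℝ such that for every n ≥ 0, ∫ x^n dΔ(x) = F_q(n)·t^n, where F_q(n) = (1/(qn+1))·(qn+1 choose n) is the Fuss–Catalan number. -/
open MeasureTheory
open scoped ENNReal NNReal

lemma rbeta_integrable {a b : ℝ} (ha : 0 < a) (hb : 0 < b) :
    IntervalIntegrable (fun x : ℝ => x ^ (a - 1) * (1 - x) ^ (b - 1)) volume 0 1 := by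
  have h := Complex.betaIntegral_convergent (u := (a : ℂ)) (v := (b : ℂ)) (by simpa) (by simpa)
  rw [intervalIntegrable_iff_integrableOn_Ioc_of_le (by norm_num)] at h ⊢
  have h2 : IntegrableOn (fun x : ℝ => ((x:ℂ) ^ ((a:ℂ) - 1) * (1 - (x:ℂ)) ^ ((b:ℂ) - 1)).re)
      (Set.Ioc 0 1) volume := h.re
  refine MeasureTheory.IntegrableOn.congr_fun h2 ?_ measurableSet_Ioc
  intro x hx
  have hx0 : (0:ℝ) ≤ x := le_of_lt hx.1
  have hx1 : (0:ℝ) ≤ 1 - x := by linarith [hx.2]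
  have e1 : ((x : ℂ) ^ ((a:ℂ) - 1)) = ((x ^ (a-1) : ℝ) : ℂ) := by
    rw [Complex.ofReal_cpow hx0]; push_cast; ring_nf
  have e2 : ((1 - (x:ℂ)) ^ ((b:ℂ) - 1)) = (((1-x) ^ (b-1) : ℝ) : ℂ) := by
    rw [Complex.ofReal_cpow hx1]; push_cast; ring_nf
  simp only [e1, e2, ← Complex.ofReal_mul, Complex.ofReal_re]

lemma rbeta_eq {a b : ℝ} (ha : 0 < a) (hb : 0 < b) :
    ∫ x in (0:ℝ)..1, x ^ (a - 1) * (1 - x) ^ (b - 1)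
      = Real.Gamma a * Real.Gamma b / Real.Gamma (a + b) := by
  have key : Complex.Gamma a * Complex.Gamma b
      = Complex.Gamma ((a:ℂ) + b) * Complex.betaIntegral a b :=
    Complex.Gamma_mul_Gamma_eq_betaIntegral (by simpa) (by simpa)
  have hBC : Complex.betaIntegral a b
      = ((∫ x in (0:ℝ)..1, x ^ (a - 1) * (1 - x) ^ (b - 1) : ℝ) : ℂ) := by
    rw [Complex.betaIntegral, ← intervalIntegral.integral_ofReal]
    refine intervalIntegral.integral_congr (fun x hx => ?_)
    rw [Set.uIcc_of_le (by norm_num : (0:ℝ) ≤ 1)] at hx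
    have hx0 : (0:ℝ) ≤ x := hx.1
    have hx1 : (0:ℝ) ≤ 1 - x := by linarith [hx.2]
    have e1 : ((x : ℂ) ^ ((a:ℂ) - 1)) = ((x ^ (a-1) : ℝ) : ℂ) := by
      rw [Complex.ofReal_cpow hx0]; push_cast; ring_nf
    have e2 : ((1 - (x:ℂ)) ^ ((b:ℂ) - 1)) = (((1-x) ^ (b-1) : ℝ) : ℂ) := by
      rw [Complex.ofReal_cpow hx1]; push_cast; ring_nf
    simp [e1, e2, ← Complex.ofReal_mul]
  have hG : Complex.Gamma ((a:ℂ) + b) = ((Real.Gamma (a+b) : ℝ) : ℂ) := by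
    rw [← Complex.ofReal_add, Complex.Gamma_ofReal]
  have hGne : (Real.Gamma (a+b)) ≠ 0 := (Real.Gamma_pos_of_pos (by linarith)).ne'
  rw [hBC, hG, Complex.Gamma_ofReal, Complex.Gamma_ofReal, ← Complex.ofReal_mul,
    ← Complex.ofReal_mul] at key
  have := Complex.ofReal_inj.mp key
  field_simp
  linarith [this]

noncomputable def betaMeas (a b : ℝ) : Measure ℝ :=
  (volume.restrict (Set.Ioo 0 1)).withDensity
    (fun x => ENNReal.ofReal ((Real.Gamma (a + b) / (Real.Gamma a * Real.Gamma b))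
      * (x ^ (a - 1) * (1 - x) ^ (b - 1))))

lemma betaMeas_density_contOn (a b : ℝ) :
    ContinuousOn (fun x : ℝ => (Real.Gamma (a + b) / (Real.Gamma a * Real.Gamma b))
      * (x ^ (a - 1) * (1 - x) ^ (b - 1))) (Set.Ioo 0 1) := by
  refine continuousOn_const.mul (ContinuousOn.mul ?_ ?_)
  · exact continuousOn_id.rpow_const (fun x hx => Or.inl (ne_of_gt hx.1))
  · refine (continuousOn_const.sub continuousOn_id).rpow_const (fun x hx => Or.inl ?_)
    intro h
    simp only [Pi.sub_apply, id_eq] at h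
    have hx2 := hx.2
    have : x = 1 := by linarith [sub_eq_zero.mp h]
    simp [this] at hx2

lemma betaMeas_density_aemeas (a b : ℝ) :
    AEMeasurable (fun x : ℝ => ((Real.Gamma (a + b) / (Real.Gamma a * Real.Gamma b))
      * (x ^ (a - 1) * (1 - x) ^ (b - 1))).toNNReal) (volume.restrict (Set.Ioo 0 1)) := by
  exact (measurable_real_toNNReal.comp_aemeasurable
    ((betaMeas_density_contOn a b).aemeasurable measurableSet_Ioo))

lemma betaMeas_moment {a b : ℝ} (ha : 0 < a) (hb : 0 < b) (n : ℕ) :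
    ∫ x : ℝ, x ^ n ∂(betaMeas a b)
      = (Real.Gamma (a + b) * Real.Gamma ((n : ℝ) + a))
        / (Real.Gamma a * Real.Gamma ((n : ℝ) + a + b)) := by
  set C : ℝ := Real.Gamma (a + b) / (Real.Gamma a * Real.Gamma b) with hC
  have key : ∫ x : ℝ, x ^ n ∂(betaMeas a b)
      = ∫ x in Set.Ioo (0:ℝ) 1, C * (x ^ ((n:ℝ) + a - 1) * (1 - x) ^ (b - 1)) := by
    rw [betaMeas]
    rw [show (fun x : ℝ => ENNReal.ofReal (C * (x ^ (a - 1) * (1 - x) ^ (b - 1))))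
      = (fun x : ℝ => ((C * (x ^ (a - 1) * (1 - x) ^ (b - 1))).toNNReal : ℝ≥0∞)) from rfl]
    rw [integral_withDensity_eq_integral_smul₀ (betaMeas_density_aemeas a b)]
    refine setIntegral_congr_fun measurableSet_Ioo (fun x hx => ?_)
    have hx0 : (0:ℝ) < x := hx.1
    have hx1 : (0:ℝ) < 1 - x := by linarith [hx.2]
    have hCpos : 0 < C := by
      apply div_pos (Real.Gamma_pos_of_pos (by linarith))
      exact mul_pos (Real.Gamma_pos_of_pos ha) (Real.Gamma_pos_of_pos hb)
    have hnn : 0 ≤ C * (x ^ (a - 1) * (1 - x) ^ (b - 1)) := by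
      positivity
    show ((C * (x ^ (a - 1) * (1 - x) ^ (b - 1))).toNNReal : ℝ) • (x ^ n) = _
    rw [Real.coe_toNNReal _ hnn, smul_eq_mul]
    have : x ^ ((n:ℝ) + a - 1) = x ^ (a - 1) * x ^ (n : ℝ) := by
      rw [← Real.rpow_add hx0]; ring_nf
    rw [this, Real.rpow_natCast]
    ring
  rw [key, ← MeasureTheory.integral_Ioc_eq_integral_Ioo,
    ← intervalIntegral.integral_of_le (by norm_num : (0:ℝ) ≤ 1),
    intervalIntegral.integral_const_mul, rbeta_eq (by positivity) hb]
  have h1 : Real.Gamma a ≠ 0 := (Real.Gamma_pos_of_pos ha).ne'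
  have h2 : Real.Gamma b ≠ 0 := (Real.Gamma_pos_of_pos hb).ne'
  have h3 : Real.Gamma (a + b) ≠ 0 := (Real.Gamma_pos_of_pos (by linarith)).ne'
  have h4 : Real.Gamma ((n:ℝ) + a + b) ≠ 0 :=
    (Real.Gamma_pos_of_pos (by positivity)).ne'
  field_simp [hC]
  rw [hC]
  field_simp

lemma betaMeas_outside (a b : ℝ) : betaMeas a b (Set.Ioo 0 1)ᶜ = 0 := by
  rw [betaMeas, withDensity_apply _ (measurableSet_Ioo.compl),
    Measure.restrict_restrict (measurableSet_Ioo.compl)]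
  simp

lemma betaMeas_prob {a b : ℝ} (ha : 0 < a) (hb : 0 < b) :
    IsProbabilityMeasure (betaMeas a b) := by
  constructor
  set C : ℝ := Real.Gamma (a + b) / (Real.Gamma a * Real.Gamma b) with hC
  have hCpos : 0 < C := div_pos (Real.Gamma_pos_of_pos (by linarith))
      (mul_pos (Real.Gamma_pos_of_pos ha) (Real.Gamma_pos_of_pos hb))
  rw [betaMeas, withDensity_apply _ MeasurableSet.univ, Measure.restrict_univ]
  have hint : IntegrableOn (fun x : ℝ => C * (x ^ (a - 1) * (1 - x) ^ (b - 1)))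
      (Set.Ioo 0 1) volume := by
    have := (rbeta_integrable ha hb).const_mul C
    rw [intervalIntegrable_iff_integrableOn_Ioc_of_le (by norm_num : (0:ℝ) ≤ 1)] at this
    exact this.mono_set Set.Ioo_subset_Ioc_self
  rw [← ofReal_integral_eq_lintegral_ofReal hint ?nn]
  case nn =>
    filter_upwards [self_mem_ae_restrict measurableSet_Ioo] with x hx
    have hx0 : (0:ℝ) < x := hx.1
    have hx1 : (0:ℝ) < 1 - x := by linarith [hx.2]
    positivity
  rw [integral_const_mul, ← MeasureTheory.integral_Ioc_eq_integral_Ioo,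
    ← intervalIntegral.integral_of_le (by norm_num : (0:ℝ) ≤ 1), rbeta_eq ha hb]
  have h1 : (0:ℝ) < Real.Gamma a := Real.Gamma_pos_of_pos ha
  have h2 : (0:ℝ) < Real.Gamma b := Real.Gamma_pos_of_pos hb
  have h3 : (0:ℝ) < Real.Gamma (a + b) := Real.Gamma_pos_of_pos (by linarith)
  rw [hC]
  rw [show Real.Gamma (a + b) / (Real.Gamma a * Real.Gamma b)
      * (Real.Gamma a * Real.Gamma b / Real.Gamma (a + b)) = 1 by field_simp]
  simp

/-- The Fuss–Catalan number `F_q(n) = (1/(qn+1)) * (qn+1 choose n)`, as a real number. -/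
noncomputable def fussCatalan (q n : ℕ) : ℝ :=
  (1 / (q * n + 1 : ℝ)) * (Nat.choose (q * n + 1) n : ℝ)

lemma fact_add_prod (p k : ℕ) :
    (p + k).factorial = p.factorial * ∏ j ∈ Finset.range k, (p + j + 1) := by
  induction k with
  | zero => simp
  | succ k ih =>
    rw [Finset.prod_range_succ, ← mul_assoc, ← ih]
    rw [show p + (k+1) = (p + k) + 1 by ring, Nat.factorial_succ]
    ring

lemma fussCatalan_eq (m n : ℕ) :
    fussCatalan (m+1) n = (((m+1) * n).factorial : ℝ)
      / ((n.factorial : ℝ) * ((m * n + 1).factorial : ℝ)) := by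
  have hq : n ≤ (m+1) * n + 1 := by nlinarith
  have hchoose := Nat.choose_mul_factorial_mul_factorial hq
  have hsub : (m+1) * n + 1 - n = m * n + 1 := by
    have : (m+1) * n = m * n + n := by ring
    omega
  rw [hsub] at hchoose
  have hcast : ((Nat.choose ((m+1)*n+1) n : ℕ) : ℝ) * (n.factorial : ℝ)
      * ((m*n+1).factorial : ℝ) = (((m+1)*n+1).factorial : ℝ) := by
    exact_mod_cast congrArg (Nat.cast (R := ℝ)) hchoose
  rw [fussCatalan]
  have h1 : ((m+1) * n + 1 : ℝ) ≠ 0 := by positivity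
  have h2 : (n.factorial : ℝ) ≠ 0 := Nat.cast_ne_zero.mpr n.factorial_ne_zero
  have h3 : ((m*n+1).factorial : ℝ) ≠ 0 := Nat.cast_ne_zero.mpr (Nat.factorial_ne_zero _)
  have h4 : (((m+1)*n+1).factorial : ℝ) = (((m+1)*n+1 : ℕ) : ℝ) * (((m+1)*n).factorial : ℝ) := by
    exact_mod_cast congrArg (Nat.cast (R := ℝ)) (Nat.factorial_succ ((m+1)*n))
  have h5 : (((m+1)*n+1 : ℕ) : ℝ) = ((m+1 : ℕ) : ℝ) * n + 1 := by push_cast; ring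
  rw [h4, h5] at hcast
  field_simp
  push_cast at hcast ⊢
  nlinarith [hcast]

lemma star (m n : ℕ) :
    fussCatalan (m+1) (n+1) * (∏ k ∈ Finset.range m, ((m * n + k + 2 : ℕ) : ℝ))
      = fussCatalan (m+1) n * ((m+1 : ℕ) : ℝ)
        * (∏ k ∈ Finset.range m, (((m+1) * n + k + 1 : ℕ) : ℝ)) := by
  have f1 : ((m+1) * (n+1)).factorial
      = ((m+1) * n).factorial * (∏ j ∈ Finset.range m, ((m+1) * n + j + 1)) * ((m+1) * (n+1)) := by
    have : (m+1) * (n+1) = (m+1) * n + (m+1) := by ring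
    rw [this, fact_add_prod, Finset.prod_range_succ]
    ring
  have f2 : (m * (n+1) + 1).factorial
      = (m * n + 1).factorial * ∏ j ∈ Finset.range m, (m * n + j + 2) := by
    have : m * (n+1) + 1 = (m * n + 1) + m := by ring
    rw [this, fact_add_prod]
    congr 1
    exact Finset.prod_congr rfl (fun j _ => by ring)
  rw [fussCatalan_eq, fussCatalan_eq]
  have h2 : ∀ j : ℕ, ((j.factorial : ℕ) : ℝ) ≠ 0 :=
    fun j => Nat.cast_ne_zero.mpr (Nat.factorial_ne_zero _)
  rw [show (((m+1) * (n+1)).factorial : ℝ)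
      = (((m+1) * n).factorial : ℝ) * (∏ j ∈ Finset.range m, (((m+1) * n + j + 1 : ℕ) : ℝ))
        * (((m+1) * (n+1) : ℕ) : ℝ) by exact_mod_cast congrArg (Nat.cast (R := ℝ)) f1]
  rw [show ((m * (n+1) + 1).factorial : ℝ)
      = ((m * n + 1).factorial : ℝ) * (∏ j ∈ Finset.range m, ((m * n + j + 2 : ℕ) : ℝ))
        by exact_mod_cast congrArg (Nat.cast (R := ℝ)) f2]
  have h3 : ((n+1).factorial : ℝ) = ((n+1 : ℕ) : ℝ) * (n.factorial : ℝ) := by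
    exact_mod_cast congrArg (Nat.cast (R := ℝ)) (Nat.factorial_succ n)
  rw [h3]
  have h4 : (((m+1) * (n+1) : ℕ) : ℝ) = ((m+1 : ℕ) : ℝ) * ((n+1 : ℕ) : ℝ) := by push_cast; ring
  rw [h4]
  have hprodne : (∏ j ∈ Finset.range m, ((m * n + j + 2 : ℕ) : ℝ)) ≠ 0 :=
    Finset.prod_ne_zero_iff.mpr (fun j _ => by positivity)
  have hn1 : ((n+1 : ℕ) : ℝ) ≠ 0 := by positivity
  field_simp

lemma fussCatalan_one (n : ℕ) : fussCatalan 1 n = 1 := by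
  rw [fussCatalan, one_mul, Nat.choose_succ_self_right]
  have : ((n:ℝ) + 1) ≠ 0 := by positivity
  push_cast
  field_simp

lemma fussCatalan_zero (q : ℕ) : fussCatalan q 0 = 1 := by
  rw [fussCatalan]
  simp

lemma gamma_ratio_prod (m n : ℕ) :
    (∏ k : Fin m, (Real.Gamma ((n:ℝ) + (((k:ℕ):ℝ)+1)/((m:ℝ)+1))
        / Real.Gamma ((n:ℝ) + (((k:ℕ):ℝ)+2)/(m:ℝ))))
      = fussCatalan (m+1) n * (((m:ℝ)^m) / ((m:ℝ)+1)^(m+1))^n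
        * ∏ k : Fin m, (Real.Gamma ((((k:ℕ):ℝ)+1)/((m:ℝ)+1))
            / Real.Gamma ((((k:ℕ):ℝ)+2)/(m:ℝ))) := by
  rcases Nat.eq_zero_or_pos m with hm0 | hmpos
  · subst hm0
    simp [fussCatalan_one]
  have hm : (0:ℝ) < m := by exact_mod_cast hmpos
  induction n with
  | zero => simp [fussCatalan_zero]
  | succ n ih =>
    have key : ∀ k : Fin m,
        Real.Gamma ((↑(n+1):ℝ) + (((k:ℕ):ℝ)+1)/((m:ℝ)+1))
          / Real.Gamma ((↑(n+1):ℝ) + (((k:ℕ):ℝ)+2)/(m:ℝ))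
        = ((((n:ℕ):ℝ) + (((k:ℕ):ℝ)+1)/((m:ℝ)+1)) / (((n:ℕ):ℝ) + (((k:ℕ):ℝ)+2)/(m:ℝ)))
          * (Real.Gamma (((n:ℕ):ℝ) + (((k:ℕ):ℝ)+1)/((m:ℝ)+1))
            / Real.Gamma (((n:ℕ):ℝ) + (((k:ℕ):ℝ)+2)/(m:ℝ))) := by
      intro k
      have h1 : (0:ℝ) < ((n:ℕ):ℝ) + (((k:ℕ):ℝ)+1)/((m:ℝ)+1) := by positivity
      have h2 : (0:ℝ) < ((n:ℕ):ℝ) + (((k:ℕ):ℝ)+2)/(m:ℝ) := by positivity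
      rw [show (↑(n+1):ℝ) + (((k:ℕ):ℝ)+1)/((m:ℝ)+1)
            = (((n:ℕ):ℝ) + (((k:ℕ):ℝ)+1)/((m:ℝ)+1)) + 1 by push_cast; ring,
          show (↑(n+1):ℝ) + (((k:ℕ):ℝ)+2)/(m:ℝ)
            = (((n:ℕ):ℝ) + (((k:ℕ):ℝ)+2)/(m:ℝ)) + 1 by push_cast; ring,
          Real.Gamma_add_one h1.ne', Real.Gamma_add_one h2.ne']
      rw [mul_div_mul_comm]
    rw [Fintype.prod_congr _ _ key, Finset.prod_mul_distrib, ih]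
    rw [← mul_assoc, ← mul_assoc]
    congr 1
    -- now a scalar identity
    have hA : (∏ k : Fin m, (((n:ℕ):ℝ) + (((k:ℕ):ℝ)+1)/((m:ℝ)+1))) * ((m:ℝ)+1)^m
        = ∏ k ∈ Finset.range m, (((m+1) * n + k + 1 : ℕ) : ℝ) := by
      have haux : ∏ k : Fin m, ((((n:ℕ):ℝ) + (((k:ℕ):ℝ)+1)/((m:ℝ)+1)) * ((m:ℝ)+1))
          = ∏ k ∈ Finset.range m, (((m+1) * n + k + 1 : ℕ) : ℝ) := by
        rw [← Fin.prod_univ_eq_prod_range (fun k => (((m+1) * n + k + 1 : ℕ) : ℝ)) m]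
        refine Finset.prod_congr rfl (fun k _ => ?_)
        have : ((m:ℝ)+1) ≠ 0 := by positivity
        push_cast
        field_simp
        ring
      rw [Finset.prod_mul_distrib, Finset.prod_const, Finset.card_univ, Fintype.card_fin] at haux
      exact haux
    have hB : (∏ k : Fin m, (((n:ℕ):ℝ) + (((k:ℕ):ℝ)+2)/(m:ℝ))) * ((m:ℝ))^m
        = ∏ k ∈ Finset.range m, ((m * n + k + 2 : ℕ) : ℝ) := by
      have haux : ∏ k : Fin m, ((((n:ℕ):ℝ) + (((k:ℕ):ℝ)+2)/(m:ℝ)) * (m:ℝ))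
          = ∏ k ∈ Finset.range m, ((m * n + k + 2 : ℕ) : ℝ) := by
        rw [← Fin.prod_univ_eq_prod_range (fun k => ((m * n + k + 2 : ℕ) : ℝ)) m]
        refine Finset.prod_congr rfl (fun k _ => ?_)
        push_cast
        field_simp
        ring
      rw [Finset.prod_mul_distrib, Finset.prod_const, Finset.card_univ, Fintype.card_fin] at haux
      exact haux
    set S1 : ℝ := ∏ k ∈ Finset.range m, (((m+1) * n + k + 1 : ℕ) : ℝ) with hS1
    set S2 : ℝ := ∏ k ∈ Finset.range m, ((m * n + k + 2 : ℕ) : ℝ) with hS2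
    have hS1pos : 0 < S1 := Finset.prod_pos (fun k _ => by positivity)
    have hS2pos : 0 < S2 := Finset.prod_pos (fun k _ => by positivity)
    have hstar := star m n
    rw [← hS1, ← hS2] at hstar
    have hmp : (0:ℝ) < (m:ℝ)^m := by positivity
    have hmp1 : (0:ℝ) < ((m:ℝ)+1)^m := by positivity
    have hPA : (∏ k : Fin m, (((n:ℕ):ℝ) + (((k:ℕ):ℝ)+1)/((m:ℝ)+1))) = S1 / ((m:ℝ)+1)^m := by
      rw [← hA]; field_simp
    have hPB : (∏ k : Fin m, (((n:ℕ):ℝ) + (((k:ℕ):ℝ)+2)/(m:ℝ))) = S2 / ((m:ℝ))^m := by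
      rw [← hB]; field_simp
    rw [Finset.prod_div_distrib, hPA, hPB, pow_succ]
    have hcast : ((m+1 : ℕ) : ℝ) = (m:ℝ) + 1 := by push_cast; ring
    rw [hcast] at hstar
    have hfc : fussCatalan (m+1) (n+1) = fussCatalan (m+1) n * ((m:ℝ)+1) * S1 / S2 := by
      field_simp at hstar ⊢
      linarith [hstar]
    rw [hfc, pow_succ _ n]
    field_simp

/-- **The measure `Δ_t`.** For every `q ≥ 1` and `t > 0` there exists a compactly
supported probability measure on `ℝ` whose `n`-th moment is `F_q(n) · t^n`. -/
theorem stmt14 (q : ℕ) (hq : 1 ≤ q) (t : ℝ) (ht : 0 < t) :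
    ∃ Δ : Measure ℝ, IsProbabilityMeasure Δ ∧
      (∃ R : ℝ, Δ (Set.Icc (-R) R)ᶜ = 0) ∧
      ∀ n : ℕ, ∫ x : ℝ, x ^ n ∂Δ = fussCatalan q n * t ^ n := by
  obtain ⟨m, rfl⟩ : ∃ m, q = m + 1 := ⟨q - 1, (Nat.succ_pred_eq_of_pos hq).symm⟩
  -- parameters
  set a : Fin m → ℝ := fun k => (((k:ℕ):ℝ)+1)/((m:ℝ)+1) with ha_def
  set bb : Fin m → ℝ := fun k => (((k:ℕ):ℝ)+2)/(m:ℝ) with hbb_def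
  set d : Fin m → ℝ := fun k => bb k - a k with hd_def
  have hmk : ∀ k : Fin m, (0:ℝ) < m := fun k => by exact_mod_cast k.pos
  have ha : ∀ k : Fin m, 0 < a k := fun k => by
    simp only [ha_def]; positivity
  have hbbpos : ∀ k : Fin m, 0 < bb k := fun k => by
    have := hmk k; simp only [hbb_def]; positivity
  have hd : ∀ k : Fin m, 0 < d k := fun k => by
    have hm := hmk k
    have : d k = (((k:ℕ):ℝ) + (m:ℝ) + 2)/((m:ℝ)*((m:ℝ)+1)) := by
      simp only [hd_def, hbb_def, ha_def]
      field_simp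
      ring
    rw [this]; positivity
  have hab : ∀ k : Fin m, a k + d k = bb k := fun k => by simp [hd_def]
  have hmm : (0:ℝ) < (m:ℝ)^m := by
    rcases Nat.eq_zero_or_pos m with h | h
    · simp [h]
    · have : (0:ℝ) < m := by exact_mod_cast h
      positivity
  set c : ℝ := t * ((m:ℝ)+1)^(m+1) / (m:ℝ)^m with hc_def
  have hm1 : (0:ℝ) < ((m:ℝ)+1)^(m+1) := by positivity
  have hc : 0 < c := by rw [hc_def]; positivity
  set μ : Fin m → Measure ℝ := fun k => betaMeas (a k) (d k) with hμ_def
  haveI hprob : ∀ k, IsProbabilityMeasure (μ k) := fun k => betaMeas_prob (ha k) (hd k)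
  set f : (Fin m → ℝ) → ℝ := fun x => c * ∏ k, x k with hf_def
  have hfm : Measurable f := by
    apply Measurable.const_mul
    exact Finset.univ.measurable_prod (fun k _ => measurable_pi_apply k)
  refine ⟨Measure.map f (Measure.pi μ), ?_, ⟨c, ?_⟩, ?_⟩
  · exact Measure.isProbabilityMeasure_map hfm.aemeasurable
  · -- support
    rw [Measure.map_apply hfm (measurableSet_Icc.compl)]
    have hsub : f ⁻¹' (Set.Icc (-c) c)ᶜ ⊆ ⋃ k, (fun x : Fin m → ℝ => x k) ⁻¹' (Set.Ioo 0 1)ᶜ := by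
      intro x hx
      by_contra hxn
      simp only [Set.mem_iUnion, not_exists, Set.mem_preimage, Set.mem_compl_iff, not_not] at hxn
      apply hx
      rw [Set.mem_Icc]
      have h0 : (0:ℝ) ≤ ∏ k, x k := Finset.prod_nonneg (fun k _ => (hxn k).1.le)
      have h1 : (∏ k, x k) ≤ 1 :=
        Finset.prod_le_one (fun k _ => (hxn k).1.le) (fun k _ => (hxn k).2.le)
      constructor
      · have : 0 ≤ f x := by
          simp only [hf_def]; positivity
        linarith
      · simp only [hf_def]
        nlinarith
    refine measure_mono_null hsub (measure_iUnion_null (fun k => ?_))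
    exact Measure.pi_eval_preimage_null _ (betaMeas_outside _ _)
  · -- moments
    intro n
    rw [integral_map hfm.aemeasurable ((continuous_pow n).measurable.aestronglyMeasurable)]
    have hpow : ∀ y : Fin m → ℝ, (f y) ^ n = c ^ n * ∏ k, (y k) ^ n := by
      intro y
      simp only [hf_def]
      rw [mul_pow, Finset.prod_pow]
    simp only [hpow]
    rw [integral_const_mul]
    have hpi : ∫ y : Fin m → ℝ, ∏ k, (y k) ^ n ∂(Measure.pi μ)
        = ∏ k : Fin m, ∫ x : ℝ, x ^ n ∂(μ k) := by
      exact MeasureTheory.integral_fintype_prod_eq_prod (E := fun _ => ℝ)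
        (fun _ x => x ^ n) (μ := μ)
    rw [hpi]
    have hmom : ∀ k : Fin m, ∫ x : ℝ, x ^ n ∂(μ k)
        = (Real.Gamma (bb k) / Real.Gamma (a k))
          * (Real.Gamma ((n:ℝ) + a k) / Real.Gamma ((n:ℝ) + bb k)) := by
      intro k
      rw [hμ_def, betaMeas_moment (ha k) (hd k) n]
      rw [hab k, show (n:ℝ) + a k + d k = (n:ℝ) + bb k by rw [← hab k]; ring]
      rw [mul_div_mul_comm]
    rw [Finset.prod_congr rfl (fun k _ => hmom k), Finset.prod_mul_distrib]
    have hg := gamma_ratio_prod m n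
    rw [show (∏ k : Fin m, (Real.Gamma ((n:ℝ) + a k) / Real.Gamma ((n:ℝ) + bb k)))
        = fussCatalan (m+1) n * (((m:ℝ)^m) / ((m:ℝ)+1)^(m+1))^n
          * ∏ k : Fin m, (Real.Gamma (a k) / Real.Gamma (bb k)) from hg]
    have hcancel : (∏ k : Fin m, (Real.Gamma (bb k) / Real.Gamma (a k)))
        * (∏ k : Fin m, (Real.Gamma (a k) / Real.Gamma (bb k))) = 1 := by
      rw [← Finset.prod_mul_distrib]
      refine Finset.prod_eq_one (fun k _ => ?_)
      have h1 : Real.Gamma (a k) ≠ 0 := (Real.Gamma_pos_of_pos (ha k)).ne'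
      have h2 : Real.Gamma (bb k) ≠ 0 := (Real.Gamma_pos_of_pos (hbbpos k)).ne'
      field_simp
    have hct : c * (((m:ℝ)^m) / ((m:ℝ)+1)^(m+1)) = t := by
      rw [hc_def]
      field_simp
    calc c ^ n * ((∏ k : Fin m, (Real.Gamma (bb k) / Real.Gamma (a k)))
          * (fussCatalan (m+1) n * (((m:ℝ)^m) / ((m:ℝ)+1)^(m+1))^n
            * ∏ k : Fin m, (Real.Gamma (a k) / Real.Gamma (bb k))))
        = fussCatalan (m+1) n * (c * (((m:ℝ)^m) / ((m:ℝ)+1)^(m+1)))^n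
          * ((∏ k : Fin m, (Real.Gamma (bb k) / Real.Gamma (a k)))
            * (∏ k : Fin m, (Real.Gamma (a k) / Real.Gamma (bb k)))) := by
          rw [mul_pow]; ring
      _ = fussCatalan (m+1) n * t ^ n := by rw [hcancel, hct, mul_one]
end

section
/- Let q ≥ 1 and n ≥ 1 be integers. The number of non-crossing partitions of the linearly ordered set {1, 2, …, qn} in which the size of every block is divisible by q equals (1/((q+1)n+1))·((q+1)n+1 choose n). -/
/-- Two elements lie in the same block of a finpartition of `Finset.univ`. -/
def SameBlock {α : Type*} [DecidableEq α] [Fintype α]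
    (P : Finpartition (Finset.univ : Finset α)) (a b : α) : Prop :=
  ∃ B ∈ P.parts, a ∈ B ∧ b ∈ B

/-- A finpartition of the linearly ordered set `Fin m` is non-crossing if there are no
`a < x < c < y` with `a, c` in one block, `x, y` in one block, and `a, x` in different
blocks. -/
def IsNonCrossing {m : ℕ} (P : Finpartition (Finset.univ : Finset (Fin m))) : Prop :=
  ¬ ∃ a x c y : Fin m, a < x ∧ x < c ∧ c < y ∧
      SameBlock P a c ∧ SameBlock P x y ∧ ¬ SameBlock P a x

namespace NC15

open Fin.NatCast

variable {m : ℕ}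

/-- closing function: the max of the block containing `j`. -/
def cOf (P : Finpartition (Finset.univ : Finset (Fin m))) (j : Fin m) : Fin m :=
  (P.part j).max' ⟨j, P.mem_part (Finset.mem_univ j)⟩

def IsGoodFun (c : Fin m → Fin m) : Prop :=
  (∀ j, j ≤ c j) ∧ ∀ j j' : Fin m, j ≤ j' → j' ≤ c j → c j' ≤ c j

def fiberCard (c : Fin m → Fin m) (t : Fin m) : ℕ :=
  (Finset.univ.filter fun j => c j = t).card

lemma sameBlock_iff (P : Finpartition (Finset.univ : Finset (Fin m))) (a b : Fin m) :
    SameBlock P a b ↔ P.part a = P.part b := by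
  constructor
  · rintro ⟨B, hB, ha, hb⟩
    rw [P.part_eq_of_mem hB ha, P.part_eq_of_mem hB hb]
  · intro h
    exact ⟨P.part a, P.part_mem.2 (Finset.mem_univ a), P.mem_part (Finset.mem_univ a),
      h ▸ P.mem_part (Finset.mem_univ b)⟩

lemma cOf_mem (P : Finpartition (Finset.univ : Finset (Fin m))) (j : Fin m) :
    cOf P j ∈ P.part j :=
  (P.part j).max'_mem _

lemma le_cOf (P : Finpartition (Finset.univ : Finset (Fin m))) {j : Fin m} {b : Fin m}
    (hb : b ∈ P.part j) : b ≤ cOf P j :=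
  (P.part j).le_max' b hb

lemma mem_part_iff_cOf (P : Finpartition (Finset.univ : Finset (Fin m))) {a b : Fin m} :
    b ∈ P.part a ↔ cOf P b = cOf P a := by
  constructor
  · intro h
    have : P.part b = P.part a := P.part_eq_of_mem (P.part_mem.2 (Finset.mem_univ a)) h
    simp [cOf, this]
  · intro h
    have hmem : cOf P b ∈ P.part a := by rw [h]; exact cOf_mem P a
    have : P.part b = P.part a :=
      P.eq_of_mem_parts (P.part_mem.2 (Finset.mem_univ b)) (P.part_mem.2 (Finset.mem_univ a))
        (cOf_mem P b) hmem
    exact this ▸ P.mem_part (Finset.mem_univ b)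

lemma sameBlock_iff_cOf (P : Finpartition (Finset.univ : Finset (Fin m))) (a b : Fin m) :
    SameBlock P a b ↔ cOf P a = cOf P b := by
  rw [sameBlock_iff]
  constructor
  · intro h; simp [cOf, h]
  · intro h
    have := (mem_part_iff_cOf P (a := b) (b := a)).2 h
    exact P.part_eq_of_mem (P.part_mem.2 (Finset.mem_univ b)) this

lemma cOf_cOf (P : Finpartition (Finset.univ : Finset (Fin m))) (j : Fin m) :
    cOf P (cOf P j) = cOf P j :=
  (mem_part_iff_cOf P).1 (cOf_mem P j)

lemma nonCrossing_iff_goodFun (P : Finpartition (Finset.univ : Finset (Fin m))) :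
    IsNonCrossing P ↔ IsGoodFun (cOf P) := by
  constructor
  · intro hNC
    refine ⟨fun j => le_cOf P (P.mem_part (Finset.mem_univ j)), ?_⟩
    intro j j' hjj' hj'c
    by_contra hlt
    push_neg at hlt
    have h1 : j < j' := by
      rcases lt_or_eq_of_le hjj' with h | h
      · exact h
      · exfalso; subst h; exact absurd le_rfl (not_le.2 hlt)
    have h2 : j' < cOf P j := by
      rcases lt_or_eq_of_le hj'c with h | h
      · exact h
      · exfalso
        have : cOf P j' = cOf P j := by rw [h, cOf_cOf]
        rw [this] at hlt; exact lt_irrefl _ hlt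
    exact hNC ⟨j, j', cOf P j, cOf P j', h1, h2, hlt,
      (sameBlock_iff_cOf P _ _).2 (cOf_cOf P j).symm,
      (sameBlock_iff_cOf P _ _).2 (cOf_cOf P j').symm,
      fun hs => absurd ((sameBlock_iff_cOf P _ _).1 hs) (ne_of_lt hlt)⟩
  · intro hgood
    rintro ⟨a, x, c, y, hax, hxc, hcy, hac, hxy, hnax⟩
    have hac' : cOf P a = cOf P c := (sameBlock_iff_cOf P _ _).1 hac
    have hxy' : cOf P x = cOf P y := (sameBlock_iff_cOf P _ _).1 hxy
    have hnax' : cOf P a ≠ cOf P x := fun h => hnax ((sameBlock_iff_cOf P _ _).2 h)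
    have hxa : x ≤ cOf P a := by
      rw [hac']; exact le_of_lt (lt_of_lt_of_le hxc (hgood.1 c))
    have h1 : cOf P x ≤ cOf P a := hgood.2 a x (le_of_lt hax) hxa
    have hcx : c ≤ cOf P x := by
      rw [hxy']; exact le_of_lt (lt_of_lt_of_le hcy (hgood.1 y))
    have h2 : cOf P c ≤ cOf P x := hgood.2 x c (le_of_lt hxc) hcx
    refine hnax' (le_antisymm ?_ h1)
    rw [hac']; exact h2


/-- setoid whose classes are the fibers of `c`. -/
def fibSetoid (c : Fin m → Fin m) : Setoid (Fin m) :=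
  ⟨fun a b => c a = c b, ⟨fun _ => rfl, Eq.symm, Eq.trans⟩⟩

instance (c : Fin m → Fin m) : DecidableRel (fibSetoid c).r :=
  fun a b => decidable_of_iff (c a = c b) Iff.rfl

/-- partition into fibers of `c`. -/
def partOf (c : Fin m → Fin m) : Finpartition (Finset.univ : Finset (Fin m)) :=
  Finpartition.ofSetoid (fibSetoid c)

lemma mem_part_partOf_iff (c : Fin m → Fin m) (a b : Fin m) :
    b ∈ (partOf c).part a ↔ c a = c b :=
  Finpartition.mem_part_ofSetoid_iff_rel

lemma ext_part (P Q : Finpartition (Finset.univ : Finset (Fin m)))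
    (h : ∀ a : Fin m, P.part a = Q.part a) : P = Q := by
  ext B
  constructor
  · intro hB
    obtain ⟨a, ha⟩ := P.nonempty_of_mem_parts hB
    rw [← P.part_eq_of_mem hB ha, h a]
    exact Q.part_mem.2 (Finset.mem_univ a)
  · intro hB
    obtain ⟨a, ha⟩ := Q.nonempty_of_mem_parts hB
    rw [← Q.part_eq_of_mem hB ha, ← h a]
    exact P.part_mem.2 (Finset.mem_univ a)

lemma partOf_cOf (P : Finpartition (Finset.univ : Finset (Fin m))) : partOf (cOf P) = P := by
  apply ext_part
  intro a
  ext b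
  rw [mem_part_partOf_iff, mem_part_iff_cOf, eq_comm]

lemma cOf_partOf {c : Fin m → Fin m} (hc : IsGoodFun c) : cOf (partOf c) = c := by
  funext j
  have hcc : c (c j) = c j :=
    le_antisymm (hc.2 j (c j) (hc.1 j) le_rfl) (hc.1 (c j))
  apply le_antisymm
  · apply Finset.max'_le
    intro b hb
    rw [mem_part_partOf_iff] at hb
    calc b ≤ c b := hc.1 b
    _ = c j := hb.symm
  · apply Finset.le_max'
    rw [mem_part_partOf_iff]
    exact hcc.symm

lemma parts_card_iff (P : Finpartition (Finset.univ : Finset (Fin m))) (q : ℕ) :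
    (∀ B ∈ P.parts, q ∣ B.card) ↔ ∀ t, q ∣ fiberCard (cOf P) t := by
  constructor
  · intro h t
    rcases Finset.eq_empty_or_nonempty (Finset.univ.filter fun j => cOf P j = t) with he | ⟨j, hj⟩
    · rw [fiberCard, he]; simp
    · rw [Finset.mem_filter] at hj
      have : (Finset.univ.filter fun j' => cOf P j' = t) = P.part j := by
        ext b
        rw [Finset.mem_filter, mem_part_iff_cOf, hj.2]
        simp
      rw [fiberCard, this]
      exact h _ (P.part_mem.2 (Finset.mem_univ j))
  · intro h B hB
    obtain ⟨a, ha⟩ := P.nonempty_of_mem_parts hB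
    have hPa : P.part a = B := P.part_eq_of_mem hB ha
    have : B = Finset.univ.filter fun j => cOf P j = cOf P a := by
      ext b
      rw [Finset.mem_filter, ← hPa, mem_part_iff_cOf]
      simp
    rw [this]
    exact h _


def equivPart1 (q : ℕ) :
    {P : Finpartition (Finset.univ : Finset (Fin m)) //
        IsNonCrossing P ∧ ∀ B ∈ P.parts, q ∣ B.card} ≃
      {c : Fin m → Fin m // IsGoodFun c ∧ ∀ t, q ∣ fiberCard c t} where
  toFun P := ⟨cOf P.1, (nonCrossing_iff_goodFun _).1 P.2.1, (parts_card_iff _ q).1 P.2.2⟩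
  invFun c := ⟨partOf c.1, by
    constructor
    · rw [nonCrossing_iff_goodFun, cOf_partOf c.2.1]; exact c.2.1
    · rw [parts_card_iff _ q, cOf_partOf c.2.1]; exact c.2.2⟩
  left_inv P := Subtype.ext (partOf_cOf P.1)
  right_inv c := Subtype.ext (cOf_partOf c.2.1)

/-! ### Part 2: words -/

/-- prefix sum of a word. -/
def Sv (v : Fin m → ℕ) (i : ℕ) : ℕ :=
  ∑ j ∈ Finset.univ.filter (fun j : Fin m => (j : ℕ) < i), v j

/-- height function. -/
def Hv (v : Fin m → ℕ) (i : ℕ) : ℤ := (i : ℤ) - Sv v i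

/-- the word condition (for Part 2; `q`-divisibility kept separate). -/
def IsLatt (v : Fin m → ℕ) : Prop :=
  Sv v m = m ∧ ∀ i, i ≤ m → Sv v i ≤ i

/-- word of a closing function: fiber sizes. -/
def vOf (c : Fin m → Fin m) (t : Fin m) : ℕ := fiberCard c t

/-- closing function of a word. -/
def cMin (v : Fin m → ℕ) (j : Fin m) : Fin m :=
  if h : (Finset.univ.filter fun t : Fin m =>
      j ≤ t ∧ Hv v ((t : ℕ) + 1) ≤ Hv v (j : ℕ)).Nonempty
  then (Finset.univ.filter fun t : Fin m =>
      j ≤ t ∧ Hv v ((t : ℕ) + 1) ≤ Hv v (j : ℕ)).min' h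
  else j

lemma Sv_succ (v : Fin m → ℕ) {i : ℕ} (h : i < m) :
    Sv v (i + 1) = Sv v i + v ⟨i, h⟩ := by
  unfold Sv
  rw [show (Finset.univ.filter fun j : Fin m => (j : ℕ) < i + 1)
      = insert ⟨i, h⟩ (Finset.univ.filter fun j : Fin m => (j : ℕ) < i) by
    ext j
    simp only [Finset.mem_insert, Finset.mem_filter, Finset.mem_univ, true_and, Fin.ext_iff]
    omega]
  rw [Finset.sum_insert (by simp)]
  ring

lemma Sv_stable (v : Fin m → ℕ) {i : ℕ} (h : m ≤ i) : Sv v i = Sv v m := by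
  unfold Sv
  congr 1
  ext j
  simp only [Finset.mem_filter, Finset.mem_univ, true_and]
  omega


lemma card_filter_lt {i : ℕ} (h : i ≤ m) :
    (Finset.univ.filter fun j : Fin m => (j : ℕ) < i).card = i := by
  induction i with
  | zero => simp
  | succ k ih =>
    rw [show (Finset.univ.filter fun j : Fin m => (j : ℕ) < k + 1)
        = insert ⟨k, by omega⟩ (Finset.univ.filter fun j : Fin m => (j : ℕ) < k) by
      ext j
      simp only [Finset.mem_insert, Finset.mem_filter, Finset.mem_univ, true_and, Fin.ext_iff]
      omega]
    rw [Finset.card_insert_of_notMem (by simp), ih (by omega)]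

lemma Sv_mono (v : Fin m → ℕ) {i i' : ℕ} (h : i ≤ i') : Sv v i ≤ Sv v i' :=
  Finset.sum_le_sum_of_subset (fun j hj => by
    simp only [Finset.mem_filter, Finset.mem_univ, true_and] at *
    omega)

/-- the "open set" at time `i`. -/
def Op (c : Fin m → Fin m) (i : ℕ) : Finset (Fin m) :=
  Finset.univ.filter fun j => (j : ℕ) < i ∧ i ≤ (c j : ℕ)

lemma Sv_vOf (c : Fin m → Fin m) (i : ℕ) :
    Sv (vOf c) i = (Finset.univ.filter fun j : Fin m => ((c j : ℕ)) < i).card := by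
  rw [Finset.card_eq_sum_card_fiberwise
    (f := c) (t := Finset.univ.filter fun t : Fin m => (t : ℕ) < i)
    (fun x hx => by
      simp only [Finset.mem_coe, Finset.mem_filter, Finset.mem_univ, true_and] at *
      exact hx)]
  unfold Sv vOf fiberCard
  apply Finset.sum_congr rfl
  intro t ht
  simp only [Finset.mem_filter, Finset.mem_univ, true_and] at ht
  congr 1
  ext j
  simp only [Finset.mem_filter, Finset.mem_univ, true_and]
  constructor
  · intro h; exact ⟨h ▸ ht, h⟩
  · rintro ⟨_, h2⟩; exact h2

lemma latt_vOf {c : Fin m → Fin m} (hc : ∀ j, j ≤ c j) : IsLatt (vOf c) := by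
  constructor
  · rw [Sv_vOf]
    rw [show (Finset.univ.filter fun j : Fin m => ((c j : ℕ)) < m) = Finset.univ by
      ext j; simp [(c j).isLt]]
    simp [Finset.card_univ]
  · intro i hi
    rw [Sv_vOf]
    refine le_trans (Finset.card_le_card ?_) (le_of_eq (card_filter_lt hi))
    intro j hj
    simp only [Finset.mem_filter, Finset.mem_univ, true_and] at *
    exact lt_of_le_of_lt (hc j) hj

lemma Hv_vOf {c : Fin m → Fin m} (hc : ∀ j, j ≤ c j) {i : ℕ} (hi : i ≤ m) :
    Hv (vOf c) i = ((Op c i).card : ℤ) := by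
  have hsplit : (Finset.univ.filter fun j : Fin m => (j : ℕ) < i)
      = (Finset.univ.filter fun j : Fin m => ((c j : ℕ)) < i) ∪ Op c i := by
    ext j
    simp only [Op, Finset.mem_union, Finset.mem_filter, Finset.mem_univ, true_and]
    have := hc j
    constructor
    · intro h; omega
    · intro h; rcases h with h | h
      · exact lt_of_le_of_lt this h
      · exact h.1
  have hdisj : Disjoint (Finset.univ.filter fun j : Fin m => ((c j : ℕ)) < i) (Op c i) := by
    rw [Finset.disjoint_left]
    intro j hj hj2
    simp only [Op, Finset.mem_filter, Finset.mem_univ, true_and] at *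
    omega
  have := Finset.card_union_of_disjoint hdisj
  rw [← hsplit, card_filter_lt hi] at this
  rw [Hv, Sv_vOf]
  omega

lemma A1 {c : Fin m → Fin m} (hc : IsGoodFun c) (j : Fin m) :
    Hv (vOf c) ((c j : ℕ) + 1) ≤ Hv (vOf c) (j : ℕ) := by
  rw [Hv_vOf hc.1 (by omega : (c j : ℕ) + 1 ≤ m), Hv_vOf hc.1 (le_of_lt j.isLt)]
  have : Op c ((c j : ℕ) + 1) ⊆ Op c (j : ℕ) := by
    intro j' hj'
    simp only [Op, Finset.mem_filter, Finset.mem_univ, true_and] at *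
    obtain ⟨h1, h2⟩ := hj'
    have hj'j : j' < j := by
      by_contra hle
      push_neg at hle
      have : c j' ≤ c j := hc.2 j j' hle (by
        rw [Fin.le_def]; omega)
      rw [Fin.le_def] at this
      omega
    have := hc.1 j
    rw [Fin.lt_def] at hj'j
    rw [Fin.le_def] at this
    constructor
    · exact hj'j
    · omega
  exact_mod_cast Finset.card_le_card this

lemma A2 {c : Fin m → Fin m} (hc : IsGoodFun c) (j t : Fin m) (h1 : j ≤ t) (h2 : t < c j) :
    Hv (vOf c) (j : ℕ) < Hv (vOf c) ((t : ℕ) + 1) := by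
  rw [Hv_vOf hc.1 (le_of_lt j.isLt), Hv_vOf hc.1 (by omega : (t : ℕ) + 1 ≤ m)]
  have hsub : insert j (Op c (j : ℕ)) ⊆ Op c ((t : ℕ) + 1) := by
    intro j' hj'
    rcases Finset.mem_insert.1 hj' with h | h
    · subst h
      simp only [Op, Finset.mem_filter, Finset.mem_univ, true_and]
      rw [Fin.le_def] at h1
      rw [Fin.lt_def] at h2
      omega
    · simp only [Op, Finset.mem_filter, Finset.mem_univ, true_and] at *
      obtain ⟨ha, hb⟩ := h
      have : c j ≤ c j' := hc.2 j' j (by rw [Fin.le_def]; omega) (by rw [Fin.le_def]; omega)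
      rw [Fin.le_def] at this
      rw [Fin.le_def] at h1
      rw [Fin.lt_def] at h2
      omega
  have hnotmem : j ∉ Op c (j : ℕ) := by
    simp [Op]
  have := Finset.card_le_card hsub
  rw [Finset.card_insert_of_notMem hnotmem] at this
  omega

lemma cMin_vOf {c : Fin m → Fin m} (hc : IsGoodFun c) : cMin (vOf c) = c := by
  funext j
  have hmem : c j ∈ Finset.univ.filter fun t : Fin m =>
      j ≤ t ∧ Hv (vOf c) ((t : ℕ) + 1) ≤ Hv (vOf c) (j : ℕ) := by
    simp only [Finset.mem_filter, Finset.mem_univ, true_and]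
    exact ⟨hc.1 j, A1 hc j⟩
  have hne : (Finset.univ.filter fun t : Fin m =>
      j ≤ t ∧ Hv (vOf c) ((t : ℕ) + 1) ≤ Hv (vOf c) (j : ℕ)).Nonempty := ⟨c j, hmem⟩
  rw [cMin, dif_pos hne]
  apply le_antisymm
  · exact Finset.min'_le _ _ hmem
  · by_contra hlt
    push_neg at hlt
    have hmin := Finset.min'_mem _ hne
    simp only [Finset.mem_filter, Finset.mem_univ, true_and] at hmin
    have := A2 hc j _ hmin.1 hlt
    omega


lemma Hv_nonneg {v : Fin m → ℕ} (hv : IsLatt v) {i : ℕ} (hi : i ≤ m) : 0 ≤ Hv v i := by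
  have := hv.2 i hi
  rw [Hv]
  omega

lemma Hv_m {v : Fin m → ℕ} (hv : IsLatt v) : Hv v m = 0 := by
  rw [Hv, hv.1]; ring

lemma Hv_zero (v : Fin m → ℕ) : Hv v 0 = 0 := by simp [Hv, Sv]

lemma Hv_succ_le (v : Fin m → ℕ) (i : ℕ) : Hv v (i + 1) ≤ Hv v i + 1 := by
  have := Sv_mono v (by omega : i ≤ i + 1)
  unfold Hv
  push_cast
  omega

lemma SJ_nonempty {v : Fin m → ℕ} (hv : IsLatt v) (j : Fin m) :
    (Finset.univ.filter fun t : Fin m =>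
      j ≤ t ∧ Hv v ((t : ℕ) + 1) ≤ Hv v (j : ℕ)).Nonempty := by
  have hm : 1 ≤ m := Nat.one_le_iff_ne_zero.2 (fun h => by subst h; exact j.elim0)
  refine ⟨⟨m - 1, by omega⟩, ?_⟩
  simp only [Finset.mem_filter, Finset.mem_univ, true_and]
  constructor
  · rw [Fin.le_def]
    simp only []
    omega
  · rw [show (m - 1) + 1 = m by omega, Hv_m hv]
    exact Hv_nonneg hv (le_of_lt j.isLt)

lemma cMin_le {v : Fin m → ℕ} (hv : IsLatt v) (j : Fin m) : j ≤ cMin v j := by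
  rw [cMin, dif_pos (SJ_nonempty hv j)]
  have := Finset.min'_mem _ (SJ_nonempty hv j)
  simp only [Finset.mem_filter, Finset.mem_univ, true_and] at this
  exact this.1

lemma cMin_Hv {v : Fin m → ℕ} (hv : IsLatt v) (j : Fin m) :
    Hv v ((cMin v j : ℕ) + 1) ≤ Hv v (j : ℕ) := by
  rw [cMin, dif_pos (SJ_nonempty hv j)]
  have := Finset.min'_mem _ (SJ_nonempty hv j)
  simp only [Finset.mem_filter, Finset.mem_univ, true_and] at this
  exact this.2

lemma cMin_lt_Hv {v : Fin m → ℕ} (hv : IsLatt v) (j t : Fin m) (h1 : j ≤ t)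
    (h2 : t < cMin v j) : Hv v (j : ℕ) < Hv v ((t : ℕ) + 1) := by
  by_contra hle
  push_neg at hle
  have hmem : t ∈ Finset.univ.filter fun t : Fin m =>
      j ≤ t ∧ Hv v ((t : ℕ) + 1) ≤ Hv v (j : ℕ) := by
    simp only [Finset.mem_filter, Finset.mem_univ, true_and]
    exact ⟨h1, hle⟩
  have := Finset.min'_le _ _ hmem
  rw [cMin, dif_pos (SJ_nonempty hv j)] at h2
  exact absurd this (not_le.2 h2)

/-- characterization of cMin as the unique minimizer -/
lemma cMin_eq {v : Fin m → ℕ} (hv : IsLatt v) (j t : Fin m) (h1 : j ≤ t)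
    (h2 : Hv v ((t : ℕ) + 1) ≤ Hv v (j : ℕ))
    (h3 : ∀ t' : Fin m, j ≤ t' → t' < t → Hv v (j : ℕ) < Hv v ((t' : ℕ) + 1)) :
    cMin v j = t := by
  have hmem : t ∈ Finset.univ.filter fun t : Fin m =>
      j ≤ t ∧ Hv v ((t : ℕ) + 1) ≤ Hv v (j : ℕ) := by
    simp only [Finset.mem_filter, Finset.mem_univ, true_and]
    exact ⟨h1, h2⟩
  apply le_antisymm
  · rw [cMin, dif_pos (SJ_nonempty hv j)]
    exact Finset.min'_le _ _ hmem
  · by_contra hlt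
    push_neg at hlt
    exact absurd (cMin_Hv hv j) (not_le.2 (h3 _ (cMin_le hv j) hlt))

lemma good_cMin {v : Fin m → ℕ} (hv : IsLatt v) : IsGoodFun (cMin v) := by
  refine ⟨cMin_le hv, ?_⟩
  intro j j' hjj' hj'c
  rcases eq_or_lt_of_le hjj' with rfl | hlt
  · exact le_rfl
  · have hHlt : Hv v (j : ℕ) < Hv v (j' : ℕ) := by
      have hj'pos : 0 < (j' : ℕ) := lt_of_le_of_lt (Nat.zero_le _) hlt
      have ht' : (⟨(j' : ℕ) - 1, by omega⟩ : Fin m) < cMin v j := by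
        rw [Fin.lt_def]
        simp only []
        rw [Fin.le_def] at hj'c
        omega
      have := cMin_lt_Hv hv j ⟨(j' : ℕ) - 1, by omega⟩ (by
        rw [Fin.le_def]; simp only []; rw [Fin.lt_def] at hlt; omega) ht'
      rwa [show ((j' : ℕ) - 1) + 1 = (j' : ℕ) by omega] at this
    have hmem : cMin v j ∈ Finset.univ.filter fun t : Fin m =>
        j' ≤ t ∧ Hv v ((t : ℕ) + 1) ≤ Hv v ((j' : ℕ)) := by
      simp only [Finset.mem_filter, Finset.mem_univ, true_and]
      exact ⟨hj'c, le_of_lt (lt_of_le_of_lt (cMin_Hv hv j) hHlt)⟩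
    rw [cMin, dif_pos (SJ_nonempty hv j')]
    exact Finset.min'_le _ _ hmem

lemma vOf_cMin {v : Fin m → ℕ} (hv : IsLatt v) : vOf (cMin v) = v := by
  funext t
  unfold vOf fiberCard
  have hIcc : (Finset.Icc (Hv v ((t : ℕ) + 1)) (Hv v (t : ℕ))).card = v t := by
    rw [Int.card_Icc]
    have := Sv_succ v t.isLt
    unfold Hv
    rw [show (⟨(t : ℕ), t.isLt⟩ : Fin m) = t from rfl] at this
    push_cast [this]
    omega
  rw [← hIcc]
  refine Finset.card_bij (fun j _ => Hv v (j : ℕ)) ?_ ?_ ?_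
  · -- membership
    intro j hjmem
    have hj : cMin v j = t := by simpa using hjmem
    rw [Finset.mem_Icc]
    constructor
    · rw [← hj]; exact cMin_Hv hv j
    · rcases eq_or_lt_of_le (show j ≤ t by rw [← hj]; exact cMin_le hv j) with heq | hlt
      · rw [heq]
      · have := cMin_lt_Hv hv j ⟨(t : ℕ) - 1, by omega⟩
          (by rw [Fin.le_def]; simp only []; rw [Fin.lt_def] at hlt; omega)
          (by rw [hj, Fin.lt_def]; simp only []; rw [Fin.lt_def] at hlt; omega)
        have htpos : 0 < (t : ℕ) := lt_of_le_of_lt (Nat.zero_le _) hlt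
        rw [show ((t : ℕ) - 1) + 1 = (t : ℕ) by omega] at this
        exact le_of_lt this
  · -- injectivity
    intro j₁ hj₁m j₂ hj₂m heq
    have hj₁ : cMin v j₁ = t := by simpa using hj₁m
    have hj₂ : cMin v j₂ = t := by simpa using hj₂m
    by_contra hne
    have key : ∀ j j' : Fin m, j < j' → cMin v j = t → cMin v j' = t →
        Hv v (j : ℕ) ≠ Hv v (j' : ℕ) := by
      intro j j' hlt h1 h2 hH
      have hj'pos : 0 < (j' : ℕ) := lt_of_le_of_lt (Nat.zero_le _) hlt
      have := cMin_lt_Hv hv j ⟨(j' : ℕ) - 1, by omega⟩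
        (by rw [Fin.le_def]; simp only []; rw [Fin.lt_def] at hlt; omega)
        (by rw [h1, Fin.lt_def]
            simp only []
            have h3 : j' ≤ cMin v j' := cMin_le hv j'
            rw [Fin.le_def] at h3
            rw [h2] at h3
            omega)
      rw [show ((j' : ℕ) - 1) + 1 = (j' : ℕ) by omega] at this
      omega
    rcases lt_or_gt_of_ne (fun h => hne h) with h | h
    · exact key j₁ j₂ h hj₁ hj₂ heq
    · exact key j₂ j₁ h hj₂ hj₁ heq.symm
  · -- surjectivity
    intro l hl
    rw [Finset.mem_Icc] at hl
    have hl0 : 0 ≤ l := le_trans (Hv_nonneg hv (by omega : (t : ℕ) + 1 ≤ m)) hl.1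
    set R := (Finset.range ((t : ℕ) + 1)).filter (fun s => Hv v s ≤ l) with hR
    have hR0 : (0 : ℕ) ∈ R := by
      rw [hR, Finset.mem_filter, Finset.mem_range]
      exact ⟨by omega, by rw [Hv_zero]; exact hl0⟩
    obtain ⟨jn, hjnR, hjnmax⟩ : ∃ jn ∈ R, ∀ s ∈ R, s ≤ jn :=
      ⟨R.max' ⟨0, hR0⟩, R.max'_mem _, fun s hs => Finset.le_max' R s hs⟩
    rw [hR, Finset.mem_filter, Finset.mem_range] at hjnR
    have hjnle : jn ≤ (t : ℕ) := by omega
    have hjnH : Hv v jn ≤ l := hjnR.2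
    have hafter : ∀ s, jn < s → s ≤ (t : ℕ) → l < Hv v s := by
      intro s hs1 hs2
      by_contra hle
      push_neg at hle
      have hmem : s ∈ R := by
        rw [hR, Finset.mem_filter, Finset.mem_range]
        exact ⟨by omega, hle⟩
      have := hjnmax s hmem
      omega
    have hjnHeq : Hv v jn = l := by
      rcases eq_or_lt_of_le hjnle with heq | hlt
      · subst heq
        exact le_antisymm hjnH hl.2
      · have h1 : l < Hv v (jn + 1) := hafter (jn + 1) (by omega) (by omega)
        have h2 := Hv_succ_le v jn
        omega
    refine ⟨⟨jn, by omega⟩, ?_, hjnHeq⟩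
    simp only [Finset.mem_filter, Finset.mem_univ, true_and]
    apply cMin_eq hv
    · rw [Fin.le_def]; exact hjnle
    · rw [hjnHeq]; exact hl.1
    · intro t' ht'1 ht'2
      rw [hjnHeq]
      apply hafter
      · rw [Fin.le_def] at ht'1; simp only [] at ht'1; omega
      · rw [Fin.lt_def] at ht'2; omega

/-- Part 2 equivalence. -/
def equivPart2 (q : ℕ) :
    {c : Fin m → Fin m // IsGoodFun c ∧ ∀ t, q ∣ fiberCard c t} ≃
      {v : Fin m → ℕ // IsLatt v ∧ ∀ t, q ∣ v t} where
  toFun c := ⟨vOf c.1, latt_vOf c.2.1.1, c.2.2⟩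
  invFun v := ⟨cMin v.1, good_cMin v.2.1, by
    intro t
    have : vOf (cMin v.1) = v.1 := vOf_cMin v.2.1
    rw [show fiberCard (cMin v.1) t = vOf (cMin v.1) t from rfl, this]
    exact v.2.2 t⟩
  left_inv c := Subtype.ext (cMin_vOf c.2.1)
  right_inv v := Subtype.ext (vOf_cMin v.2.1)


/-! ### Part 3: counting -/

section Part3

variable (q n : ℕ)

/-- normalized word condition -/
def IsE (u : Fin (q * n) → ℕ) : Prop :=
  (∑ t, u t = n) ∧ ∀ i, i ≤ q * n → q * Sv u i ≤ i

lemma Sv_top {m : ℕ} (v : Fin m → ℕ) : Sv v m = ∑ t, v t := by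
  unfold Sv
  apply Finset.sum_congr _ (fun _ _ => rfl)
  ext j
  simp [j.isLt]

lemma Sv_smul {m : ℕ} (v : Fin m → ℕ) (q : ℕ) (i : ℕ) :
    Sv (fun t => q * v t) i = q * Sv v i := by
  unfold Sv
  rw [Finset.mul_sum]

def equiv3a (hq : 1 ≤ q) :
    {v : Fin (q * n) → ℕ // IsLatt v ∧ ∀ t, q ∣ v t} ≃ {u : Fin (q * n) → ℕ // IsE q n u} where
  toFun v := ⟨fun t => v.1 t / q, by
    obtain ⟨⟨hsum, hpre⟩, hdvd⟩ := v.2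
    have hv : (fun t => q * (v.1 t / q)) = v.1 := by
      funext t; exact Nat.mul_div_cancel' (hdvd t) 
    constructor
    · have h1 : Sv (fun t => q * (v.1 t / q)) (q * n) = q * n := by rw [hv]; exact hsum
      rw [Sv_smul] at h1
      rw [← Sv_top]
      have h2 : q * Sv (fun t => v.1 t / q) (q * n) = q * n := h1
      exact Nat.eq_of_mul_eq_mul_left (by omega) h2
    · intro i hi
      have := hpre i hi
      rw [← hv, Sv_smul] at this
      exact this⟩
  invFun u := ⟨fun t => q * u.1 t, by
    obtain ⟨hsum, hpre⟩ := u.2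
    refine ⟨⟨?_, ?_⟩, fun t => ⟨u.1 t, rfl⟩⟩
    · rw [Sv_top, ← Finset.mul_sum, hsum]
    · intro i hi
      rw [Sv_smul]
      exact hpre i hi⟩
  left_inv v := Subtype.ext (by
    funext t
    exact Nat.mul_div_cancel' (v.2.2 t))
  right_inv u := Subtype.ext (by
    funext t
    exact Nat.mul_div_cancel_left _ (by omega))

/-- the integer path function of a length-`qn+1` word -/
def Tw (w : Fin (q * n + 1) → ℕ) (i : ℕ) : ℤ :=
  ∑ l ∈ Finset.range i, ((q : ℤ) * w ((l : ℕ) : Fin (q * n + 1)) - 1)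

/-- goodness of a cyclic word -/
def GoodW (w : Fin (q * n + 1) → ℕ) : Prop :=
  (∑ t, w t = n) ∧ (∀ i, 1 ≤ i → i ≤ q * n → Tw q n w i ≤ 0) ∧ Tw q n w (q * n) = 0

lemma Tw_succ (w : Fin (q * n + 1) → ℕ) (i : ℕ) :
    Tw q n w (i + 1) = Tw q n w i + ((q : ℤ) * w ((i : ℕ) : Fin (q * n + 1)) - 1) :=
  Finset.sum_range_succ _ i

lemma Tw_of_pref (u : Fin (q * n) → ℕ) (w : Fin (q * n + 1) → ℕ)
    (huw : ∀ l : ℕ, (hl : l < q * n) → w ((l : ℕ) : Fin (q * n + 1)) = u ⟨l, hl⟩)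
    {i : ℕ} (hi : i ≤ q * n) :
    Tw q n w i = (q : ℤ) * Sv u i - i := by
  induction i with
  | zero => simp [Tw, Hv, Sv]
  | succ k ih =>
    rw [Tw_succ, ih (by omega), huw k (by omega), Sv_succ u (by omega : k < q * n)]
    push_cast
    ring


/-- extend a length-`qn` word by a trailing zero -/
def extW (u : Fin (q * n) → ℕ) : Fin (q * n + 1) → ℕ :=
  fun i => if h : (i : ℕ) < q * n then u ⟨i, h⟩ else 0

lemma extW_pref (u : Fin (q * n) → ℕ) :
    ∀ l : ℕ, (hl : l < q * n) → extW q n u ((l : ℕ) : Fin (q * n + 1)) = u ⟨l, hl⟩ := by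
  intro l hl
  have hval : (((l : ℕ) : Fin (q * n + 1)) : ℕ) = l := by
    rw [Fin.val_natCast, Nat.mod_eq_of_lt (by omega)]
  rw [extW]
  rw [dif_pos (by omega : (((l : ℕ) : Fin (q * n + 1)) : ℕ) < q * n)]
  congr 1
  exact Fin.ext (by rw [hval])

lemma sum_extW (u : Fin (q * n) → ℕ) : ∑ t, extW q n u t = ∑ t, u t := by
  rw [Fin.sum_univ_castSucc]
  have h1 : extW q n u (Fin.last (q * n)) = 0 := by
    rw [extW, dif_neg (by simp [Fin.last])]
  rw [h1, add_zero]
  apply Finset.sum_congr rfl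
  intro t _
  rw [extW, dif_pos (by simp [Fin.castSucc, Fin.castAdd, Fin.castLE] : ((t.castSucc : Fin (q*n+1)) : ℕ) < q * n)]
  congr 1

lemma GoodW_last {w : Fin (q * n + 1) → ℕ} (hq : 1 ≤ q) (hg : GoodW q n w) :
    w (Fin.last (q * n)) = 0 := by
  obtain ⟨hsum, hpre, heq⟩ := hg
  have hN := Tw_succ q n w (q * n)
  have hTop : Tw q n w (q * n + 1) = (q : ℤ) * n - (q * n + 1) := by
    have : ∀ i : ℕ, i ≤ q * n + 1 → Tw q n w i = (q : ℤ) * (∑ l ∈ Finset.range i,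
        (w ((l : ℕ) : Fin (q * n + 1)) : ℤ)) - i := by
      intro i hi
      rw [Tw, Finset.sum_sub_distrib, Finset.mul_sum]
      simp
    rw [this _ le_rfl]
    have hfull : ∑ l ∈ Finset.range (q * n + 1), (w ((l : ℕ) : Fin (q * n + 1)) : ℤ)
        = ((∑ t, w t : ℕ) : ℤ) := by
      push_cast
      rw [← Fin.sum_univ_eq_sum_range (fun l => (w ((l : ℕ) : Fin (q * n + 1)) : ℤ)) (q * n + 1)]
      apply Finset.sum_congr rfl
      intro t _
      congr 1
      exact congrArg w (Fin.cast_val_eq_self t)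
    rw [hfull, hsum]
    push_cast
    ring
  have hlast : ((q * n : ℕ) : Fin (q * n + 1)) = Fin.last (q * n) := by
    apply Fin.ext
    rw [Fin.val_natCast, Nat.mod_eq_of_lt (by omega)]
    simp [Fin.val_last]
  rw [heq, hlast] at hN
  have hcomb := hTop.symm.trans hN
  have h0 : (q : ℤ) * (w (Fin.last (q * n)) : ℤ) = 0 := by linarith
  rcases mul_eq_zero.1 h0 with h | h
  · exfalso
    have : q = 0 := by exact_mod_cast h
    omega
  · exact_mod_cast h

def equiv3b (hq : 1 ≤ q) :
    {u : Fin (q * n) → ℕ // IsE q n u} ≃ {w : Fin (q * n + 1) → ℕ // GoodW q n w} where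
  toFun u := ⟨extW q n u, by
    obtain ⟨hsum, hpre⟩ := u.2
    refine ⟨by rw [sum_extW, hsum], ?_, ?_⟩
    · intro i h1 h2
      rw [Tw_of_pref q n u.1 _ (extW_pref q n u.1) h2]
      have := hpre i h2
      push_cast
      omega
    · rw [Tw_of_pref q n u.1 _ (extW_pref q n u.1) le_rfl]
      rw [show Sv u.1 (q * n) = n by rw [Sv_top]; exact u.2.1]
      push_cast
      ring⟩
  invFun w := ⟨fun t => w.1 ⟨(t : ℕ), by omega⟩, by
    have hlast := GoodW_last q n hq w.2
    obtain ⟨hsum, hpre, heq⟩ := w.2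
    have hpref : ∀ l : ℕ, (hl : l < q * n) →
        w.1 ((l : ℕ) : Fin (q * n + 1)) = (fun t : Fin (q*n) => w.1 ⟨(t : ℕ), by omega⟩) ⟨l, hl⟩ := by
      intro l hl
      show w.1 ((l : ℕ) : Fin (q * n + 1)) = w.1 ⟨l, by omega⟩
      exact congrArg w.1 (Fin.ext (by rw [Fin.val_natCast, Nat.mod_eq_of_lt (by omega)]))
    constructor
    · -- sum
      have h1 : Sv (fun t : Fin (q*n) => w.1 ⟨(t : ℕ), by omega⟩) (q * n) = n := by
        have := Tw_of_pref q n (fun t : Fin (q*n) => w.1 ⟨(t : ℕ), by omega⟩) w.1 hpref (le_rfl : q * n ≤ q * n)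
        rw [heq] at this
        have hq0 : 0 < q := by omega
        have : (q : ℤ) * Sv (fun t : Fin (q*n) => w.1 ⟨(t : ℕ), by omega⟩) (q * n) = (q : ℤ) * n := by
          push_cast at this ⊢
          omega
        exact_mod_cast Nat.eq_of_mul_eq_mul_left hq0 (by exact_mod_cast this)
      rw [← Sv_top]
      exact h1
    · intro i hi
      rcases Nat.eq_zero_or_pos i with rfl | hipos
      · simp [Sv]
      · have := hpre i hipos hi
        rw [Tw_of_pref q n (fun t : Fin (q*n) => w.1 ⟨(t : ℕ), by omega⟩) w.1 hpref hi] at this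
        push_cast at this
        omega⟩
  left_inv u := Subtype.ext (by
    funext t
    show extW q n u.1 ⟨(t : ℕ), by omega⟩ = u.1 t
    rw [extW, dif_pos (show ((⟨(t : ℕ), by omega⟩ : Fin (q * n + 1)) : ℕ) < q * n from t.isLt)])
  right_inv w := Subtype.ext (by
    funext i
    show extW q n _ i = w.1 i
    rw [extW]
    by_cases h : (i : ℕ) < q * n
    · rw [dif_pos h]
    · rw [dif_neg h]
      have : i = Fin.last (q * n) := Fin.ext (by simp [Fin.last]; omega)
      rw [this]
      exact (GoodW_last q n hq w.2).symm)


/-- cyclic rotation of a word -/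
def rotW (k : ℕ) (w : Fin (q * n + 1) → ℕ) : Fin (q * n + 1) → ℕ :=
  fun i => w (i + (k : Fin (q * n + 1)))

lemma sum_rotW (k : ℕ) (w : Fin (q * n + 1) → ℕ) : ∑ t, rotW q n k w t = ∑ t, w t :=
  Equiv.sum_comp (Equiv.addRight ((k : Fin (q * n + 1)))) w

lemma rotW_rotW (a b : ℕ) (w : Fin (q * n + 1) → ℕ) :
    rotW q n a (rotW q n b w) = rotW q n (a + b) w := by
  funext i
  show w ((i + (a : Fin (q*n+1))) + (b : Fin (q*n+1))) = w (i + ((a + b : ℕ) : Fin (q*n+1)))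
  rw [Nat.cast_add, add_assoc]

lemma rotW_N (w : Fin (q * n + 1) → ℕ) : rotW q n (q * n + 1) w = w := by
  funext i
  show w (i + ((q * n + 1 : ℕ) : Fin (q*n+1))) = w i
  rw [Fin.natCast_self, add_zero]

lemma Tw_shift (w : Fin (q * n + 1) → ℕ) (k i : ℕ) :
    Tw q n w (k + i) = Tw q n w k +
      ∑ l ∈ Finset.range i, ((q : ℤ) * w (((k + l : ℕ)) : Fin (q * n + 1)) - 1) := by
  induction i with
  | zero => simp
  | succ j ih =>
    rw [show k + (j + 1) = (k + j) + 1 by omega, Tw_succ, ih, Finset.sum_range_succ]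
    ring

lemma Tw_rot (w : Fin (q * n + 1) → ℕ) (k i : ℕ) :
    Tw q n (rotW q n k w) i = Tw q n w (k + i) - Tw q n w k := by
  rw [Tw_shift]
  have : ∀ l : ℕ, (rotW q n k w) ((l : ℕ) : Fin (q*n+1)) = w ((k + l : ℕ) : Fin (q*n+1)) := by
    intro l
    show w (((l : ℕ) : Fin (q*n+1)) + (k : Fin (q*n+1))) = _
    rw [← Nat.cast_add]
    exact congrArg (fun x : ℕ => w ((x : ℕ) : Fin (q*n+1))) (Nat.add_comm l k)
  rw [Tw]
  rw [Finset.sum_congr rfl (fun l _ => by rw [this l])]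
  ring

lemma cyc_sum (w : Fin (q * n + 1) → ℕ) (hw : ∑ t, w t = n) (k : ℕ) :
    ∑ l ∈ Finset.range (q * n + 1), ((q : ℤ) * w (((k + l : ℕ)) : Fin (q * n + 1)) - 1) = -1 := by
  rw [Finset.sum_sub_distrib, Finset.sum_const, Finset.card_range]
  have h1 : ∑ l ∈ Finset.range (q * n + 1), ((q : ℤ) * w (((k + l : ℕ)) : Fin (q * n + 1)))
      = (q : ℤ) * n := by
    rw [← Finset.mul_sum]
    congr 1
    rw [← Fin.sum_univ_eq_sum_range (fun l => (w (((k + l : ℕ)) : Fin (q * n + 1)) : ℤ)) (q*n+1)]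
    have h2 : ∀ j : Fin (q*n+1), (((k + (j : ℕ) : ℕ)) : Fin (q * n + 1)) = (k : Fin (q*n+1)) + j := by
      intro j
      rw [Nat.cast_add, Fin.cast_val_eq_self]
    calc ∑ j : Fin (q*n+1), (w (((k + (j : ℕ) : ℕ)) : Fin (q * n + 1)) : ℤ)
        = ∑ j : Fin (q*n+1), (w ((k : Fin (q*n+1)) + j) : ℤ) :=
          Finset.sum_congr rfl (fun j _ => by rw [h2 j])
      _ = ∑ j, (w j : ℤ) := Fintype.sum_equiv (Equiv.addLeft (k : Fin (q*n+1))) _ _ (fun x => rfl)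
      _ = (n : ℤ) := by rw [← Nat.cast_sum _ _, hw]
  rw [h1]
  push_cast
  ring

lemma Tw_period (w : Fin (q * n + 1) → ℕ) (hw : ∑ t, w t = n) (i : ℕ) :
    Tw q n w (i + (q * n + 1)) = Tw q n w i - 1 := by
  rw [Tw_shift, cyc_sum q n w hw i]
  ring

lemma Tw_step (w : Fin (q * n + 1) → ℕ) (i : ℕ) :
    Tw q n w i - 1 ≤ Tw q n w (i + 1) := by
  rw [Tw_succ]
  have h0 : (0:ℤ) ≤ (q:ℤ) * (w ((i : ℕ) : Fin (q*n+1)) : ℤ) := by positivity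
  linarith

/-- window condition: the rotation starting at `k` is good -/
def Win (w : Fin (q * n + 1) → ℕ) (k : ℕ) : Prop :=
  (∀ i, 1 ≤ i → i ≤ q * n → Tw q n w (k + i) ≤ Tw q n w k) ∧
    Tw q n w (k + q * n) = Tw q n w k

lemma goodW_rot_iff (w : Fin (q * n + 1) → ℕ) (hw : ∑ t, w t = n) (k : ℕ) :
    GoodW q n (rotW q n k w) ↔ Win q n w k := by
  unfold GoodW Win
  rw [sum_rotW q n k w, hw]
  simp only [Tw_rot, eq_self_iff_true, true_and]
  constructor
  · rintro ⟨h1, h2⟩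
    exact ⟨fun i hi1 hi2 => by have := h1 i hi1 hi2; omega, by omega⟩
  · rintro ⟨h1, h2⟩
    exact ⟨fun i hi1 hi2 => by have := h1 i hi1 hi2; omega, by omega⟩


lemma exists_unique_win (hq : 1 ≤ q) (hn : 1 ≤ n) (w : Fin (q * n + 1) → ℕ)
    (hw : ∑ t, w t = n) : ∃! k : ℕ, k < q * n + 1 ∧ Win q n w k := by
  have hqn : 1 ≤ q * n := Nat.one_le_iff_ne_zero.2 (by positivity)
  -- the last argmax k₀
  obtain ⟨b, hb, hbmax⟩ := Finset.exists_max_image (Finset.range (q * n + 1)) (Tw q n w)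
    ⟨0, Finset.mem_range.2 (by omega)⟩
  set S := (Finset.range (q * n + 1)).filter
    (fun j => Tw q n w j = Tw q n w b) with hS
  have hSne : S.Nonempty := ⟨b, by rw [hS, Finset.mem_filter]; exact ⟨hb, rfl⟩⟩
  obtain ⟨k₀, hk₀S, hk₀max⟩ : ∃ k₀ ∈ S, ∀ j ∈ S, j ≤ k₀ :=
    ⟨S.max' hSne, S.max'_mem hSne, fun j hj => Finset.le_max' S j hj⟩
  rw [hS, Finset.mem_filter, Finset.mem_range] at hk₀S
  obtain ⟨hk₀N, hk₀b⟩ := hk₀S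
  have htop : ∀ j < q * n + 1, Tw q n w j ≤ Tw q n w k₀ :=
    fun j hj => hk₀b ▸ hbmax j (Finset.mem_range.2 hj)
  have hlastmax : ∀ j < q * n + 1, Tw q n w j = Tw q n w k₀ → j ≤ k₀ := by
    intro j hj hTj
    apply hk₀max
    rw [hS, Finset.mem_filter, Finset.mem_range]
    exact ⟨hj, by rw [hTj, hk₀b]⟩
  have hper := Tw_period q n w hw
  have f2 : ∀ j, Tw q n w j ≤ Tw q n w k₀ := by
    intro j
    induction j using Nat.strong_induction_on with
    | _ j ih =>
      by_cases hj : j < q * n + 1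
      · exact htop j hj
      · have hrw : j = (j - (q * n + 1)) + (q * n + 1) := by omega
        rw [hrw, hper]
        have := ih (j - (q * n + 1)) (by omega)
        omega
  have f2' : ∀ j, k₀ < j → Tw q n w j ≤ Tw q n w k₀ - 1 := by
    intro j hj
    by_cases hjN : j < q * n + 1
    · rcases eq_or_lt_of_le (htop j hjN) with heq | hlt
      · exact absurd (hlastmax j hjN heq) (by omega)
      · omega
    · have hrw : j = (j - (q * n + 1)) + (q * n + 1) := by omega
      rw [hrw, hper]
      have := f2 (j - (q * n + 1))
      omega
  have f4 : Tw q n w (k₀ + 1) = Tw q n w k₀ - 1 :=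
    le_antisymm (f2' _ (by omega)) (Tw_step q n w k₀)
  have winKp1 : Win q n w (k₀ + 1) := by
    constructor
    · intro i hi1 hi2
      have := f2' (k₀ + 1 + i) (by omega)
      omega
    · have hrw : k₀ + 1 + q * n = k₀ + (q * n + 1) := by omega
      rw [hrw, hper, f4]
  have winshift : ∀ k, Win q n w k → Win q n w (k + (q * n + 1)) := by
    intro k hk
    constructor
    · intro i hi1 hi2
      have hrw : k + (q * n + 1) + i = (k + i) + (q * n + 1) := by omega
      rw [hrw, hper, hper]
      have := hk.1 i hi1 hi2
      omega
    · have hrw : k + (q * n + 1) + q * n = (k + q * n) + (q * n + 1) := by omega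
      rw [hrw, hper, hper, hk.2]
  refine ⟨(k₀ + 1) % (q * n + 1), ⟨Nat.mod_lt _ (by omega), ?_⟩, ?_⟩
  · -- existence
    by_cases h : k₀ + 1 < q * n + 1
    · rw [Nat.mod_eq_of_lt h]; exact winKp1
    · have hk : k₀ + 1 = q * n + 1 := by omega
      rw [hk, Nat.mod_self]
      have h0 : Win q n w (0 + (q * n + 1)) → Win q n w 0 → True := fun _ _ => trivial
      -- Win 0 from Win (k₀+1) = Win N: need reverse shift
      have : Win q n w 0 := by
        constructor
        · intro i hi1 hi2
          have h1 := winKp1.1 i hi1 hi2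
          rw [hk] at h1
          have hrw : q * n + 1 + i = i + (q * n + 1) := by omega
          rw [hrw, hper] at h1
          have hrw2 : Tw q n w (q * n + 1) = Tw q n w (0 + (q * n + 1)) := by norm_num
          rw [hrw2, hper] at h1
          have hz : Tw q n w (0 + i) = Tw q n w i := by norm_num
          rw [hz]
          omega
        · have h1 := winKp1.2
          rw [hk] at h1
          have hrw : q * n + 1 + q * n = q * n + (q * n + 1) := by omega
          rw [hrw, hper] at h1
          have hrw2 : Tw q n w (q * n + 1) = Tw q n w (0 + (q * n + 1)) := by norm_num
          rw [hrw2, hper] at h1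
          have hz : Tw q n w (0 + q * n) = Tw q n w (q * n) := by norm_num
          rw [hz]
          omega
      exact this
  · -- uniqueness
    rintro k ⟨hkN, hwin⟩
    rcases le_or_gt k k₀ with hle | hgt
    · rcases eq_or_lt_of_le hle with rfl | hlt
      · -- k = k₀ : contradiction
        exfalso
        have h1 := hwin.2
        have := f2' (k + q * n) (by omega)
        omega
      · -- k < k₀
        have hTk : Tw q n w k = Tw q n w k₀ := by
          have h1 := hwin.1 (k₀ - k) (by omega) (by omega)
          have hrw : k + (k₀ - k) = k₀ := by omega
          rw [hrw] at h1
          exact le_antisymm (f2 k) h1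
        have h2 := hwin.2
        rcases le_or_gt (k + q * n) k₀ with hle2 | hgt2
        · -- forces k = 0, k₀ = q*n
          have hk0 : k = 0 := by omega
          have hk₀qn : k₀ = q * n := by omega
          rw [hk₀qn, Nat.mod_self]
          exact hk0
        · exfalso
          have := f2' (k + q * n) hgt2
          omega
    · -- k > k₀
      rcases eq_or_lt_of_le (Nat.succ_le_of_lt hgt) with heq | hlt
      · have hlt2 : k₀ + 1 < q * n + 1 := by omega
        rw [Nat.mod_eq_of_lt hlt2]
        omega
      · -- k > k₀ + 1 : contradiction
        exfalso
        have hTk : Tw q n w k = Tw q n w k₀ - 1 := by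
          have h1 := hwin.1 (k₀ + (q * n + 1) - k) (by omega) (by omega)
          have hrw : k + (k₀ + (q * n + 1) - k) = k₀ + (q * n + 1) := by omega
          rw [hrw, hper] at h1
          have := f2' k (by omega)
          omega
        have h2 := hwin.2
        have hrw : k + q * n = (k - 1) + (q * n + 1) := by omega
        rw [hrw, hper] at h2
        have := f2' (k - 1) (by omega)
        omega

lemma exists_unique_goodrot (hq : 1 ≤ q) (hn : 1 ≤ n) (w : Fin (q * n + 1) → ℕ)
    (hw : ∑ t, w t = n) : ∃! k : ℕ, k < q * n + 1 ∧ GoodW q n (rotW q n k w) := by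
  have h := exists_unique_win q n hq hn w hw
  simp only [goodW_rot_iff q n w hw]
  exact h


lemma bij_psi (hq : 1 ≤ q) (hn : 1 ≤ n) :
    Function.Bijective (fun p : {g : Fin (q * n + 1) → ℕ // GoodW q n g} × Fin (q * n + 1) =>
      (⟨rotW q n (q * n + 1 - (p.2 : ℕ)) p.1.1, by
        rw [sum_rotW]; exact p.1.2.1⟩ : {w : Fin (q * n + 1) → ℕ // ∑ t, w t = n})) := by
  constructor
  · rintro ⟨g, k⟩ ⟨g', k'⟩ heq
    have hw : rotW q n (q * n + 1 - (k : ℕ)) g.1 = rotW q n (q * n + 1 - (k' : ℕ)) g'.1 :=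
      congrArg Subtype.val heq
    set w := rotW q n (q * n + 1 - (k : ℕ)) g.1 with hwdef
    have hsum : ∑ t, w t = n := by rw [hwdef, sum_rotW]; exact g.2.1
    have hg : rotW q n (k : ℕ) w = g.1 := by
      rw [hwdef, rotW_rotW, show (k : ℕ) + (q * n + 1 - (k : ℕ)) = q * n + 1 by omega, rotW_N]
    have hg' : rotW q n (k' : ℕ) w = g'.1 := by
      rw [hw, rotW_rotW, show (k' : ℕ) + (q * n + 1 - (k' : ℕ)) = q * n + 1 by omega,
        rotW_N]
    obtain ⟨kk, _, huniq⟩ := exists_unique_goodrot q n hq hn w hsum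
    have h1 : (k : ℕ) = kk := huniq _ ⟨k.isLt, hg ▸ g.2⟩
    have h2 : (k' : ℕ) = kk := huniq _ ⟨k'.isLt, hg' ▸ g'.2⟩
    have hkk' : k = k' := Fin.ext (h1.trans h2.symm)
    subst hkk'
    have : g.1 = g'.1 := by rw [← hg, ← hg']
    exact Prod.ext (Subtype.ext this) rfl
  · rintro ⟨w, hsum⟩
    obtain ⟨kk, ⟨hkkN, hkkG⟩, _⟩ := exists_unique_goodrot q n hq hn w hsum
    refine ⟨(⟨⟨rotW q n kk w, hkkG⟩, ⟨kk, hkkN⟩⟩ :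
      {g : Fin (q * n + 1) → ℕ // GoodW q n g} × Fin (q * n + 1)), ?_⟩
    apply Subtype.ext
    show rotW q n (q * n + 1 - kk) (rotW q n kk w) = w
    rw [rotW_rotW, show (q * n + 1 - kk) + kk = q * n + 1 by omega, rotW_N]

lemma card_sum_words : Nat.card {w : Fin (q * n + 1) → ℕ // ∑ t, w t = n}
    = ((q + 1) * n).choose n := by
  classical
  have he : {w : Fin (q * n + 1) → ℕ // ∑ t, w t = n}
      ≃ {w : Fin (q * n + 1) → ℕ // w ∈ Finset.piAntidiag Finset.univ n} :=
    Equiv.subtypeEquivRight (fun w => by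
      rw [Finset.mem_piAntidiag]
      constructor
      · intro h; exact ⟨h, fun i _ => Finset.mem_univ i⟩
      · intro h; exact h.1)
  rw [Nat.card_congr he, Nat.card_eq_finsetCard]
  have hmap := Finset.map_sym_eq_piAntidiag (Finset.univ : Finset (Fin (q * n + 1))) n
  rw [← hmap, Finset.card_map, Finset.sym_univ]
  rw [Finset.card_univ, Sym.card_sym_eq_multichoose, Nat.multichoose_eq]
  congr 1
  · rw [Fintype.card_fin]
    ring_nf
    omega

end Part3

end NC15

/-- The number of non-crossing partitions of `{1, …, qn}` all of whose blocks have size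
divisible by `q` is the Fuss–Catalan number `F_{q+1}(n) = (1/((q+1)n+1)) ((q+1)n+1 choose n)`. -/
theorem stmt15 (q n : ℕ) (hq : 1 ≤ q) (hn : 1 ≤ n) :
    (Nat.card {P : Finpartition (Finset.univ : Finset (Fin (q * n))) //
        IsNonCrossing P ∧ ∀ B ∈ P.parts, q ∣ B.card} : ℚ) =
      (1 / ((q + 1) * n + 1 : ℚ)) * (Nat.choose ((q + 1) * n + 1) n : ℚ) := by
  have hkey : Nat.card {P : Finpartition (Finset.univ : Finset (Fin (q * n))) //
      IsNonCrossing P ∧ ∀ B ∈ P.parts, q ∣ B.card}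
      = Nat.card {w : Fin (q * n + 1) → ℕ // NC15.GoodW q n w} := by
    rw [Nat.card_congr (NC15.equivPart1 q), Nat.card_congr (NC15.equivPart2 q),
      Nat.card_congr (NC15.equiv3a q n hq), Nat.card_congr (NC15.equiv3b q n hq)]
  set x := Nat.card {w : Fin (q * n + 1) → ℕ // NC15.GoodW q n w} with hx
  have hx1 : x * (q * n + 1) = ((q + 1) * n).choose n := by
    have hb := NC15.bij_psi q n hq hn
    have hcard := Nat.card_eq_of_bijective _ hb
    rw [Nat.card_prod, show Nat.card (Fin (q * n + 1)) = q * n + 1 by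
      rw [Nat.card_eq_fintype_card, Fintype.card_fin]] at hcard
    rw [← NC15.card_sum_words q n, ← hcard]
  have hn' : n ≤ (q + 1) * n := Nat.le_mul_of_pos_left n (by omega)
  have hid : (q * n + 1) * (((q + 1) * n + 1).choose n)
      = ((q + 1) * n + 1) * (((q + 1) * n).choose n) := by
    have h1 := Nat.add_one_mul_choose_eq ((q + 1) * n) ((q + 1) * n - n)
    rw [Nat.choose_symm hn'] at h1
    rw [show (q + 1) * n - n + 1 = ((q + 1) * n + 1) - n by omega] at h1
    rw [Nat.choose_symm (by omega : n ≤ (q + 1) * n + 1)] at h1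
    rw [show (q + 1) * n + 1 - n = q * n + 1 by
      have : (q + 1) * n = q * n + n := by ring
      omega] at h1
    rw [h1]
    ring
  have hx2 : x * ((q + 1) * n + 1) = ((q + 1) * n + 1).choose n := by
    apply Nat.eq_of_mul_eq_mul_left (show 0 < q * n + 1 by omega)
    calc (q * n + 1) * (x * ((q + 1) * n + 1))
        = (x * (q * n + 1)) * ((q + 1) * n + 1) := by ring
      _ = ((q + 1) * n).choose n * ((q + 1) * n + 1) := by rw [hx1]
      _ = ((q + 1) * n + 1) * (((q + 1) * n).choose n) := by ring
      _ = (q * n + 1) * (((q + 1) * n + 1).choose n) := by rw [← hid]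
  rw [hkey]
  have hpos : ((q + 1) * n + 1 : ℚ) ≠ 0 := by positivity
  field_simp
  exact_mod_cast hx2
end
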